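/- Let N, D > 1 be coprime integers, τ ∈ ℍ, Γ = Z+Zτ, and let a, b be residues mod N with (a,b) ≠ (0,0); set s = (a/N)τ + b/N. Then Σ_{(c,d) ∈ (Z/DZ)², (c,d)≠(0,0)} ẽ_{k,r+1}(Ds, (Nc/D)τ + Nd/D; Γ) = D^{k−r+1}·ẽ_{k,r+1}(s, 0; Γ) − ẽ_{k,r+1}(Ds, 0; Γ) for all integers k, r ≥ 0 with r > k+1 (so all series converge absolutely). -/

import Mathlib

/-!
Put `t_{c,d} = (Nc/D)τ + Nd/D`. At `γ = mτ + n` the pairing `⟨γ, t_{c,d}⟩` equals `ω^{md - nc}`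
with `ω = exp(2πiN/D)`, a primitive `D`-th root of unity since `gcd(N, D) = 1`. For `r > k + 1`
the series converge absolutely, so the finite sum over all `(c, d) ∈ (ℤ/D)²` may be taken inside;
the orthogonality of characters leaves `D²` on `DΓ` and `0` off it, and on `DΓ` the identity
`Ds + Dγ = D(s + γ)` pulls out `D^{k-r-1}`. This gives `D^{k-r+1} ẽ(s, 0)` for the full sum, and
the term `(c, d) = (0, 0)` is `ẽ(Ds, 0)`. Because `(a, b) ≢ (0, 0) mod N` and `gcd(N, D) = 1`,
neither `s` nor `Ds` lies in `Γ`, so no term of the series is omitted.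
-/

open Complex

/-- The normalized Eisenstein–Kronecker series
`ẽ_{k,r+1}(s,t;ℤ+ℤτ) = ((−1)^{k+r} r!/A^k)·Σ_{γ∈Γ, γ≠−s} (conj s+conj γ)^k/(s+γ)^{r+1}·⟨γ,t⟩`
with `A = Im τ/π`, in its region of absolute convergence. -/
noncomputable def eisKron (τ : ℂ) (k r : ℕ) (s t : ℂ) : ℂ :=
  ((-1 : ℂ) ^ (k + r) * (Nat.factorial r : ℂ) / (((τ.im / Real.pi : ℝ)) : ℂ) ^ k) *
    ∑' p : ℤ × ℤ,
      (if s + ((p.1 : ℂ) * τ + (p.2 : ℂ)) = 0 then (0 : ℂ)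
       else ((starRingEnd ℂ) s + (starRingEnd ℂ) ((p.1 : ℂ) * τ + (p.2 : ℂ))) ^ k /
            (s + ((p.1 : ℂ) * τ + (p.2 : ℂ))) ^ (r + 1) *
            Complex.exp ((((p.1 : ℂ) * τ + (p.2 : ℂ)) * (starRingEnd ℂ) t -
                t * (starRingEnd ℂ) ((p.1 : ℂ) * τ + (p.2 : ℂ))) /
              (((τ.im / Real.pi : ℝ)) : ℂ)))

open ComplexConjugate Finset

theorem IsPrimitiveRoot.sum_range_pow_zpow_eq_ite {K : Type*} [Field K] {ζ : K} {n : ℕ}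
    (hζ : IsPrimitiveRoot ζ n) (m : ℤ) :
    ∑ j ∈ range n, (ζ ^ m) ^ j = if (n : ℤ) ∣ m then (n : K) else 0 := by
  split_ifs with hm
  · simp [(hζ.zpow_eq_one_iff_dvd m).mpr hm]
  · have hne : ζ ^ m ≠ 1 := mt (hζ.zpow_eq_one_iff_dvd m).mp hm
    have hpow : (ζ ^ m) ^ n = 1 := by
      rw [← zpow_natCast, ← zpow_mul, mul_comm, zpow_mul, zpow_natCast, hζ.pow_eq_one, one_zpow]
    rw [geom_sum_eq hne, hpow, sub_self, zero_div]

theorem IsPrimitiveRoot.sum_product_range_eq_ite {K : Type*} [Field K] {ζ : K} {n : ℕ}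
    (hζ : IsPrimitiveRoot ζ n) (m m' : ℤ) :
    ∑ j ∈ range n ×ˢ range n, (ζ ^ m) ^ j.1 * (ζ ^ m') ^ j.2 =
      if (n : ℤ) ∣ m ∧ (n : ℤ) ∣ m' then (n : K) ^ 2 else 0 := by
  rw [sum_product, ← sum_mul_sum, hζ.sum_range_pow_zpow_eq_ite, hζ.sum_range_pow_zpow_eq_ite]
  split_ifs <;> simp_all [sq]

def latticePoint (τ : ℂ) (p : ℤ × ℤ) : ℂ := p.1 * τ + p.2

noncomputable def kronPairing (τ z w : ℂ) : ℂ :=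
  exp ((z * conj w - w * conj z) / ((τ.im / Real.pi : ℝ) : ℂ))

theorem kronPairing_zero_right (τ z : ℂ) : kronPairing τ z 0 = 1 := by
  simp [kronPairing]

theorem norm_kronPairing (τ z w : ℂ) : ‖kronPairing τ z w‖ = 1 := by
  have h : w * conj z = conj (z * conj w) := by rw [map_mul, conj_conj, mul_comm]
  rw [kronPairing, norm_exp, h, div_ofReal_re, sub_re, conj_re, sub_self, zero_div,
    Real.exp_zero]

theorem kronPairing_latticePoint_torsion {τ : ℂ} (hτ : τ.im ≠ 0) {N D : ℕ} (hD : D ≠ 0)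
    (p : ℤ × ℤ) (c d : ℕ) :
    kronPairing τ (latticePoint τ p) ((N * c / D) * τ + N * d / D) =
      (exp (2 * Real.pi * I * (N / D)) ^ (-p.2)) ^ c *
        (exp (2 * Real.pi * I * (N / D)) ^ p.1) ^ d := by
  have hconj : conj τ = τ - (2 * τ.im : ℝ) * I := by rw [← sub_conj]; ring
  have him : (τ.im : ℂ) ≠ 0 := mod_cast hτ
  have hπ : (Real.pi : ℂ) ≠ 0 := mod_cast Real.pi_ne_zero
  have hD' : (D : ℂ) ≠ 0 := mod_cast hD
  simp only [kronPairing, latticePoint, ← exp_int_mul, ← exp_nat_mul, ← exp_add]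
  congr 1
  simp only [map_add, map_mul, map_div₀, conj_natCast, map_intCast, hconj]
  push_cast
  field_simp
  ring

theorem sum_kronPairing_torsion {τ : ℂ} (hτ : τ.im ≠ 0) {N D : ℕ} (hD : D ≠ 0)
    (hco : N.Coprime D) (p : ℤ × ℤ) :
    ∑ cd ∈ range D ×ˢ range D,
        kronPairing τ (latticePoint τ p) ((N * cd.1 / D) * τ + N * cd.2 / D) =
      if (D : ℤ) ∣ p.1 ∧ (D : ℤ) ∣ p.2 then (D : ℂ) ^ 2 else 0 := by
  simp only [kronPairing_latticePoint_torsion hτ hD,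
    (isPrimitiveRoot_exp_of_coprime N D hD hco).sum_product_range_eq_ite, dvd_neg, and_comm]

theorem latticePoint_eq_zero {τ : ℂ} (hτ : τ.im ≠ 0) {p : ℤ × ℤ} (h : latticePoint τ p = 0) :
    p = 0 := by
  have him := congrArg im h
  have hre := congrArg re h
  have h₁ : p.1 = 0 := by simpa [latticePoint, hτ] using him
  have h₂ : p.2 = 0 := by simpa [latticePoint, h₁] using hre
  exact Prod.ext h₁ h₂

theorem torsion_add_latticePoint {N : ℕ} (hN : N ≠ 0) (τ : ℂ) (a b : ℤ) (p : ℤ × ℤ) :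
    (a / N) * τ + b / N + latticePoint τ p = latticePoint τ (a + N * p.1, b + N * p.2) / N := by
  have hN' : (N : ℂ) ≠ 0 := mod_cast hN
  simp only [latticePoint]
  push_cast
  field_simp
  ring

theorem torsion_add_latticePoint_ne_zero {τ : ℂ} (hτ : τ.im ≠ 0) {N : ℕ} (hN : N ≠ 0)
    {a b : ℤ} (hab : ¬ ((N : ℤ) ∣ a ∧ (N : ℤ) ∣ b)) (p : ℤ × ℤ) :
    (a / N) * τ + b / N + latticePoint τ p ≠ 0 := by
  rw [torsion_add_latticePoint hN, div_ne_zero_iff]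
  refine ⟨fun h => hab ?_, mod_cast hN⟩
  obtain ⟨h₁, h₂⟩ := Prod.mk_eq_zero.mp (latticePoint_eq_zero hτ h)
  exact ⟨⟨-p.1, by linarith⟩, ⟨-p.2, by linarith⟩⟩

theorem summable_norm_latticePoint_rpow {τ : ℂ} (hτ : 0 < τ.im) {K : ℝ} (hK : 2 < K) :
    Summable fun p => ‖latticePoint τ p‖ ^ (-K) := by
  have hbound := (EisensteinSeries.summable_one_div_norm_rpow hK).mul_left
    (EisensteinSeries.r ⟨τ, hτ⟩ ^ (-K))
  refine ((finTwoArrowEquiv ℤ).symm.summable_iff.mpr (Summable.of_nonneg_of_le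
    (fun _ => by positivity) (EisensteinSeries.summand_bound ⟨τ, hτ⟩ (by linarith)) hbound)).congr
    fun p => ?_
  simp [latticePoint]

theorem summable_norm_torsion_add_latticePoint_rpow {τ : ℂ} (hτ : 0 < τ.im) {N : ℕ}
    (hN : N ≠ 0) (a b : ℤ) {K : ℝ} (hK : 2 < K) :
    Summable fun p => ‖(a / N) * τ + b / N + latticePoint τ p‖ ^ (-K) := by
  have hinj : Function.Injective fun p : ℤ × ℤ => (a + N * p.1, b + N * p.2) := by
    intro p q h
    simp only [Prod.mk.injEq, add_right_inj, mul_right_inj' (Int.natCast_ne_zero.mpr hN)] at h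
    exact Prod.ext h.1 h.2
  refine (((summable_norm_latticePoint_rpow hτ hK).comp_injective hinj).mul_left
    ((N : ℝ) ^ K)).congr fun p => ?_
  rw [torsion_add_latticePoint hN, norm_div, norm_natCast,
    Real.div_rpow (norm_nonneg _) (Nat.cast_nonneg N), Real.rpow_neg (Nat.cast_nonneg N)]
  field_simp
  rfl

noncomputable def eisKronTerm (k r : ℕ) (x : ℂ) : ℂ := conj x ^ k / x ^ (r + 1)

theorem eisKronTerm_natCast_mul (k r : ℕ) (D : ℕ) (x : ℂ) :
    eisKronTerm k r (D * x) = (D : ℂ) ^ k / (D : ℂ) ^ (r + 1) * eisKronTerm k r x := by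
  simp only [eisKronTerm, map_mul, conj_natCast, mul_pow]
  ring

theorem norm_eisKronTerm (k r : ℕ) {x : ℂ} (hx : x ≠ 0) :
    ‖eisKronTerm k r x‖ = ‖x‖ ^ (-((r : ℝ) + 1 - k)) := by
  rw [eisKronTerm, norm_div, norm_pow, norm_pow, norm_conj, ← Real.rpow_natCast,
    ← Real.rpow_natCast, ← Real.rpow_sub (norm_pos_iff.mpr hx)]
  push_cast
  ring_nf

theorem eisKron_eq_tsum (τ : ℂ) (k r : ℕ) {s : ℂ} (hs : ∀ p, s + latticePoint τ p ≠ 0)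
    (t : ℂ) :
    eisKron τ k r s t = (-1) ^ (k + r) * r.factorial / ((τ.im / Real.pi : ℝ) : ℂ) ^ k *
      ∑' p, eisKronTerm k r (s + latticePoint τ p) * kronPairing τ (latticePoint τ p) t := by
  refine congrArg _ (tsum_congr fun p => ?_)
  rw [if_neg (show s + ((p.1 : ℂ) * τ + p.2) ≠ 0 from hs p), ← map_add]
  rfl

theorem tsum_ite_dvd_prod {α : Type*} [AddCommMonoid α] [TopologicalSpace α] {D : ℤ}
    (hD : D ≠ 0) (f : ℤ × ℤ → α) :
    ∑' p : ℤ × ℤ, (if D ∣ p.1 ∧ D ∣ p.2 then f p else 0) = ∑' q : ℤ × ℤ, f (D * q.1, D * q.2) := by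
  have hinj : Function.Injective fun q : ℤ × ℤ => (D * q.1, D * q.2) := by
    intro p q h
    simp only [Prod.mk.injEq, mul_right_inj' hD] at h
    exact Prod.ext h.1 h.2
  rw [← hinj.tsum_eq]
  · simp
  · rintro p hp
    obtain ⟨⟨q₁, h₁⟩, ⟨q₂, h₂⟩⟩ := (Function.mem_support.mp hp).imp_symm fun h => if_neg h
    exact ⟨(q₁, q₂), Prod.ext h₁.symm h₂.symm⟩

theorem sum_eisKron_torsion_translates {τ : ℂ} (hτ : τ.im ≠ 0) {N D : ℕ} (hD : D ≠ 0)
    (hco : N.Coprime D) (k r : ℕ) {s : ℂ} (hs : ∀ p, s + latticePoint τ p ≠ 0)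
    (hDs : ∀ p, D * s + latticePoint τ p ≠ 0)
    (hsum : Summable fun p => eisKronTerm k r (D * s + latticePoint τ p)) :
    ∑ cd ∈ range D ×ˢ range D, eisKron τ k r (D * s) ((N * cd.1 / D) * τ + N * cd.2 / D) =
      (D : ℂ) ^ ((k : ℤ) - r + 1) * eisKron τ k r s 0 := by
  set C : ℂ := (-1) ^ (k + r) * r.factorial / ((τ.im / Real.pi : ℝ) : ℂ) ^ k
  set f := fun p => eisKronTerm k r (D * s + latticePoint τ p)
  have hD' : (D : ℂ) ≠ 0 := mod_cast hD
  have hsum_twisted (cd : ℕ × ℕ) : Summable fun p =>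
      f p * kronPairing τ (latticePoint τ p) ((N * cd.1 / D) * τ + N * cd.2 / D) :=
    .of_norm <| (summable_norm_iff.mpr hsum).congr fun p => by
      rw [norm_mul, norm_kronPairing, mul_one]
  have hscale (q : ℤ × ℤ) : f (D * q.1, D * q.2) =
      (D : ℂ) ^ k / (D : ℂ) ^ (r + 1) * eisKronTerm k r (s + latticePoint τ q) := by
    rw [← eisKronTerm_natCast_mul]
    simp only [f, latticePoint]
    push_cast
    congr 1
    ring
  have hpow : (D : ℂ) ^ ((k : ℤ) - r + 1) = (D : ℂ) ^ 2 * ((D : ℂ) ^ k / (D : ℂ) ^ (r + 1)) := by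
    rw [show (k : ℤ) - r + 1 = (k + 2 : ℕ) - (r + 1 : ℕ) by push_cast; ring, zpow_sub₀ hD',
      zpow_natCast, zpow_natCast, pow_add]
    ring
  calc ∑ cd ∈ range D ×ˢ range D, eisKron τ k r (D * s) ((N * cd.1 / D) * τ + N * cd.2 / D)
      = C * ∑' p, f p * ∑ cd ∈ range D ×ˢ range D,
          kronPairing τ (latticePoint τ p) ((N * cd.1 / D) * τ + N * cd.2 / D) := by
        rw [sum_congr rfl fun cd _ => eisKron_eq_tsum τ k r hDs _, ← mul_sum,
          ← Summable.tsum_finsetSum fun cd _ => hsum_twisted cd]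
        simp only [mul_sum, f, C]
    _ = C * ∑' p, if (D : ℤ) ∣ p.1 ∧ (D : ℤ) ∣ p.2 then f p * (D : ℂ) ^ 2 else 0 := by
        simp only [sum_kronPairing_torsion hτ hD hco, mul_ite, mul_zero]
    _ = (D : ℂ) ^ ((k : ℤ) - r + 1) * eisKron τ k r s 0 := by
        simp only [tsum_ite_dvd_prod (Int.natCast_ne_zero.mpr hD), hscale, eisKron_eq_tsum τ k r hs,
          kronPairing_zero_right, mul_one, tsum_mul_right, tsum_mul_left, hpow]
        ring

/-- for coprime `N, D > 1`, `s = (a/N)τ + b/N` a torsion point of exact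
level dividing `N` (i.e. `(a,b) ≢ (0,0) mod N`) and `k, r ≥ 0` with `r > k+1`:
`Σ_{(c,d)≠(0,0) in (ℤ/D)²} ẽ_{k,r+1}(Ds, (Nc/D)τ + Nd/D)
   = D^{k−r+1}·ẽ_{k,r+1}(s,0) − ẽ_{k,r+1}(Ds,0)`. -/
theorem eisKron_distribution
    (τ : ℂ) (hτ : 0 < τ.im) (N D : ℕ) (hN : 1 < N) (hD : 1 < D)
    (hco : Nat.Coprime N D) (a b : ℤ) (hab : ¬ ((N : ℤ) ∣ a ∧ (N : ℤ) ∣ b))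
    (k r : ℕ) (hkr : k + 1 < r) :
    ∑ cd ∈ (Finset.range D ×ˢ Finset.range D).erase (0, 0),
        eisKron τ k r ((D : ℂ) * (((a : ℂ) / N) * τ + (b : ℂ) / N))
          (((N : ℂ) * (cd.1 : ℂ) / D) * τ + (N : ℂ) * (cd.2 : ℂ) / D)
      = (D : ℂ) ^ ((k : ℤ) - (r : ℤ) + 1) *
          eisKron τ k r (((a : ℂ) / N) * τ + (b : ℂ) / N) 0
        - eisKron τ k r ((D : ℂ) * (((a : ℂ) / N) * τ + (b : ℂ) / N)) 0 := by
  have hN0 : N ≠ 0 := by omega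
  have hD0 : D ≠ 0 := by omega
  have hmul : (D : ℂ) * ((a / N) * τ + b / N) = ((D * a : ℤ) / N) * τ + (D * b : ℤ) / N := by
    push_cast
    ring
  have hDab : ¬ ((N : ℤ) ∣ D * a ∧ (N : ℤ) ∣ D * b) := fun h =>
    hab (h.imp (Nat.isCoprime_iff_coprime.mpr hco).dvd_of_dvd_mul_left
      (Nat.isCoprime_iff_coprime.mpr hco).dvd_of_dvd_mul_left)
  have hK : (2 : ℝ) < r + 1 - k := by
    have : (k : ℝ) + 1 < r := mod_cast hkr
    linarith
  have hsum : Summable fun p => eisKronTerm k r (D * ((a / N) * τ + b / N) + latticePoint τ p) := by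
    refine .of_norm ((summable_norm_torsion_add_latticePoint_rpow hτ hN0 (D * a) (D * b) hK).congr
      fun p => ?_)
    rw [hmul, norm_eisKronTerm k r (torsion_add_latticePoint_ne_zero hτ.ne' hN0 hDab p)]
  rw [sum_erase_eq_sub (by simp [Nat.pos_of_ne_zero hD0]),
    sum_eisKron_torsion_translates hτ.ne' hD0 hco k r
      (torsion_add_latticePoint_ne_zero hτ.ne' hN0 hab)
      (hmul ▸ torsion_add_latticePoint_ne_zero hτ.ne' hN0 hDab) hsum]
  simp
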